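/- arXiv:math/0211087 — 2 statements merged into one kernel-verified Lean document; each statement's English description precedes it below -/
import Mathlib

section
/- Let ζ be any Laurent polynomial in ℤ[q,q⁻¹]. Then there exists a unique Laurent polynomial ξ ∈ ℤ[q,q⁻¹] such that bar(ξ) = ξ and ζ + ξ ∈ qℤ[q], where bar is the ring automorphism of ℤ[q,q⁻¹] sending q to q⁻¹. -/
open LaurentPolynomial

/-!
Bar invariance says `ξ.coeff n = ξ.coeff (-n)`, so a bar-invariant `ξ` is determined by its
coefficients in degrees `≤ 0`, and the condition `ζ + ξ ∈ qℤ[q]` prescribes exactly those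
coefficients to be `-ζ.coeff n`. Conversely, reflecting the part of `-ζ` in degrees `≤ 0` to
positive degrees produces such a `ξ`.
-/

namespace LaurentPolynomial

variable {R : Type*} [CommSemiring R]

theorem eq_of_invert_eq_self_of_coeff_nonpos_eq {f g : R[T;T⁻¹]} (hf : invert f = f)
    (hg : invert g = g) (h : ∀ n : ℤ, n ≤ 0 → f.coeff n = g.coeff n) : f = g := by
  ext n
  rcases le_or_gt n 0 with hn | hn
  · exact h n hn
  · rw [← hf, ← hg, invert_apply, invert_apply]
    exact h (-n) (by omega)

noncomputable def nonposSymm (f : R[T;T⁻¹]) : R[T;T⁻¹] :=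
  AddMonoidAlgebra.ofCoeff (f.coeff.filter (· ≤ 0)) +
    invert (AddMonoidAlgebra.ofCoeff (f.coeff.filter (· < 0)))

theorem coeff_nonposSymm (f : R[T;T⁻¹]) (n : ℤ) : (nonposSymm f).coeff n = f.coeff (-|n|) := by
  simp only [nonposSymm, AddMonoidAlgebra.coeff_add, Finsupp.add_apply, invert_apply,
    Finsupp.filter_apply]
  rcases le_or_gt n 0 with hn | hn
  · rw [if_pos hn, if_neg (by omega), add_zero, abs_of_nonpos hn, neg_neg]
  · rw [if_neg (by omega), if_pos (by omega), zero_add, abs_of_pos hn]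

theorem invert_nonposSymm (f : R[T;T⁻¹]) : invert (nonposSymm f) = nonposSymm f := by
  ext n
  rw [invert_apply, coeff_nonposSymm, coeff_nonposSymm, abs_neg]

end LaurentPolynomial

/-- For any `ζ ∈ ℤ[q,q⁻¹]` there is a unique `ξ ∈ ℤ[q,q⁻¹]` with `bar ξ = ξ` and
`ζ + ξ ∈ qℤ[q]` (i.e. all coefficients of `ζ + ξ` in degrees `≤ 0` vanish), where
`bar` is the ring automorphism sending `q` to `q⁻¹`. -/
theorem exists_unique_bar_invariant_correction (ζ : LaurentPolynomial ℤ) :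
    ∃! ξ : LaurentPolynomial ℤ,
      invert ξ = ξ ∧ (∀ n : ℤ, n ≤ 0 → (ζ + ξ).coeff n = 0) := by
  have hcoeff : ∀ n : ℤ, n ≤ 0 → (-nonposSymm ζ).coeff n = -ζ.coeff n := fun n hn => by
    rw [AddMonoidAlgebra.coeff_neg, Finsupp.neg_apply, coeff_nonposSymm, abs_of_nonpos hn, neg_neg]
  refine ⟨-nonposSymm ζ, ⟨by rw [map_neg, invert_nonposSymm], fun n hn => ?_⟩, ?_⟩
  · rw [AddMonoidAlgebra.coeff_add, Finsupp.add_apply, hcoeff n hn, add_neg_cancel]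
  · rintro ξ ⟨hbar, hcorr⟩
    refine eq_of_invert_eq_self_of_coeff_nonpos_eq hbar (by rw [map_neg, invert_nonposSymm])
      fun n hn => ?_
    rw [hcoeff n hn]
    exact eq_neg_of_add_eq_zero_right (hcorr n hn)
end

section
/- Let T be a semistandard Young tableau (rows weakly increasing from left to right, columns strictly increasing from top to bottom, column lengths weakly decreasing from left to right) with entries in {1, …, n+1}, with rows numbered 1, 2, … from the top. Suppose i is the smallest positive integer such that the entry i+1 occurs in some row m of T with m ≤ i. Let the reading word of T be the sequence of entries obtained by reading the columns from rightmost to leftmost, each column from top to bottom. Then there exists a prefix of the reading word that contains strictly more entries equal to i+1 than entries equal to i. -/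
/-!
Let `T r c = i + 1` with `r + 1 ≤ i`, and take as prefix of the reading word all entries in
columns `c, c + 1, …`. Any entry `i` there would lie strictly above row `r` (entries weakly
south-east of `(r, c)` are at least `i + 1`), so `i = (i - 1) + 1` would occur in a row `≤ i - 1`,
against the minimality of `i`. Hence the prefix contains no `i` and at least one `i + 1`.
-/

/-- The reading word of a tableau on the Young diagram `μ`: read the columns from
rightmost to leftmost, each column from top to bottom.  (The diagram has
`μ.rowLen 0` columns, and column `c` has length `μ.colLen c`.) -/
def readingWord (μ : YoungDiagram) (T : SemistandardYoungTableau μ) : List ℕ :=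
  ((List.range (μ.rowLen 0)).reverse).flatMap fun c =>
    (List.range (μ.colLen c)).map fun r => T r c

theorem List.range'_suffix_range (s n : ℕ) : List.range' s (n - s) <:+ List.range n := by
  rcases le_total s n with h | h
  · refine ⟨List.range s, ?_⟩
    simpa [List.range_eq_range', Nat.add_sub_cancel' h] using
      List.range'_append_1 (s := 0) (m := s) (n := n - s)
  · simp [Nat.sub_eq_zero_of_le h]

namespace SemistandardYoungTableau

variable {μ : YoungDiagram}

theorem le_of_le_of_le (T : SemistandardYoungTableau μ) {a b r c : ℕ} (hr : r ≤ a) (hc : c ≤ b)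
    (hab : (a, b) ∈ μ) : T r c ≤ T a b :=
  (T.col_weak hr (μ.up_left_mem le_rfl hc hab)).trans (T.row_weak_of_le hc hab)

theorem exists_prefix_readingWord_mem_iff (T : SemistandardYoungTableau μ) (c : ℕ) :
    ∃ w, w <+: readingWord μ T ∧ ∀ x, x ∈ w ↔ ∃ a b, (a, b) ∈ μ ∧ c ≤ b ∧ T a b = x := by
  refine ⟨(List.range' c (μ.rowLen 0 - c)).reverse.flatMap fun b =>
    (List.range (μ.colLen b)).map fun a => T a b,
    ((List.range'_suffix_range c _).reverse).flatMap _, fun x => ?_⟩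
  simp only [List.mem_flatMap, List.mem_reverse, List.mem_range'_1, List.mem_map, List.mem_range,
    ← YoungDiagram.mem_iff_lt_colLen]
  constructor
  · rintro ⟨b, ⟨hcb, -⟩, a, hab, rfl⟩
    exact ⟨a, b, hab, hcb, rfl⟩
  · rintro ⟨a, b, hab, hcb, rfl⟩
    have hb : b < μ.rowLen 0 :=
      YoungDiagram.mem_iff_lt_rowLen.1 (μ.up_left_mem a.zero_le le_rfl hab)
    exact ⟨b, ⟨hcb, by omega⟩, a, hab, rfl⟩

end SemistandardYoungTableau

theorem exists_prefix_with_more_succ_general (μ : YoungDiagram)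
    (T : SemistandardYoungTableau μ)
    (i : ℕ)
    (hocc : ∃ r c : ℕ, (r, c) ∈ μ ∧ r + 1 ≤ i ∧ T r c = i + 1)
    (hmin : ∀ j : ℕ, 0 < j →
      (∃ r c : ℕ, (r, c) ∈ μ ∧ r + 1 ≤ j ∧ T r c = j + 1) → i ≤ j) :
    ∃ w : List ℕ, w <+: readingWord μ T ∧ w.count i < w.count (i + 1) := by
  obtain ⟨r, c, hrc, hri, hTrc⟩ := hocc
  obtain ⟨w, hw, hmem⟩ := T.exists_prefix_readingWord_mem_iff c
  have hiw : i ∉ w := by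
    intro h
    obtain ⟨a, b, hab, hcb, hTab⟩ := (hmem i).1 h
    have har : a < r := by
      by_contra! hra
      have := T.le_of_le_of_le hra hcb hab
      omega
    have := hmin (i - 1) (by omega) ⟨a, b, hab, by omega, by omega⟩
    omega
  have hsucc : i + 1 ∈ w := (hmem _).2 ⟨r, c, hrc, le_rfl, hTrc⟩
  exact ⟨w, hw, by rw [List.count_eq_zero.2 hiw]; exact List.count_pos_iff.2 hsucc⟩

/-- Let `T` be a semistandard Young tableau with entries in `{1, …, n+1}`, rows
numbered `1, 2, …` from the top (so Lean's row index `r` is row `r + 1`).  If `i` is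
the smallest positive integer such that the entry `i + 1` occurs in some row `m ≤ i`
of `T`, then some prefix of the reading word of `T` contains strictly more entries
equal to `i + 1` than entries equal to `i`. -/
theorem exists_prefix_with_more_succ (n : ℕ) (μ : YoungDiagram)
    (T : SemistandardYoungTableau μ)
    (hentries : ∀ r c : ℕ, (r, c) ∈ μ → T r c ∈ Finset.Icc 1 (n + 1))
    (i : ℕ) (hi : 0 < i)
    (hocc : ∃ r c : ℕ, (r, c) ∈ μ ∧ r + 1 ≤ i ∧ T r c = i + 1)
    (hmin : ∀ j : ℕ, 0 < j →
      (∃ r c : ℕ, (r, c) ∈ μ ∧ r + 1 ≤ j ∧ T r c = j + 1) → i ≤ j) :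
    ∃ w : List ℕ, w <+: readingWord μ T ∧ w.count i < w.count (i + 1) :=
  exists_prefix_with_more_succ_general μ T i hocc hmin
end
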